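/- arXiv:2305.00503 — 4 statements merged into one kernel-verified Lean document; each statement's English description precedes it below -/
import Mathlib

section
/- If Q and Q' are cliques of a connected graph G and v ∈ Q, v' ∈ Q' are vertices joined by a path of length ℓ in G, then Q and Q' are joined by a path of length at most ℓ + 1 in the clique graph kG. -/
open SimpleGraph

/-- A maximal clique: a clique not properly contained in any other clique. -/
def IsMaxClique {V : Type*} (G : SimpleGraph V) (s : Set V) : Prop :=
  G.IsClique s ∧ ∀ t : Set V, G.IsClique t → s ⊆ t → t = s

/-- Vertices of the clique graph: the (maximal) cliques of `G`. -/
abbrev CliqueVert {V : Type*} (G : SimpleGraph V) := {s : Set V // IsMaxClique G s}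

/-- The clique graph `kG`: cliques of `G`, two distinct cliques adjacent iff they intersect. -/
def cliqueGraph {V : Type*} (G : SimpleGraph V) : SimpleGraph (CliqueVert G) where
  Adj Q R := Q ≠ R ∧ (Q.1 ∩ R.1).Nonempty
  symm := by
    constructor
    rintro Q R ⟨hne, x, hx1, hx2⟩
    exact ⟨hne.symm, x, hx2, hx1⟩
  loopless := by constructor; rintro Q ⟨hne, -⟩; exact hne rfl

/-
Each edge `ab` of `G` lies in some maximal clique (Zorn's lemma), so a walk `v = a₀ a₁ … a_ℓ = v'`
yields cliques `R₁, …, R_ℓ` with consecutive ones sharing the vertex `aᵢ`; together with `Q ∋ v`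
and `Q' ∋ v'` they form a walk of at most `ℓ + 1` steps in `kG`, equal neighbours being merged.
-/

namespace SimpleGraph

variable {V : Type*} {G : SimpleGraph V}

theorem IsClique.exists_isMaxClique_superset {s : Set V} (hs : G.IsClique s) :
    ∃ t, IsMaxClique G t ∧ s ⊆ t := by
  obtain ⟨t, hst, ht⟩ := zorn_subset_nonempty {t : Set V | G.IsClique t}
    (fun c hc hchain _ ↦ ⟨⋃₀ c, (isClique_sUnion hchain.directedOn).2 hc,
      fun _ ↦ Set.subset_sUnion_of_mem⟩) s hs
  exact ⟨t, ⟨ht.prop, fun u hu htu ↦ (ht.eq_of_subset hu htu).symm⟩, hst⟩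

theorem Adj.exists_cliqueVert_mem {a b : V} (hab : G.Adj a b) :
    ∃ R : CliqueVert G, a ∈ R.1 ∧ b ∈ R.1 := by
  obtain ⟨t, ht, hab_t⟩ := (isClique_pair.2 fun _ ↦ hab).exists_isMaxClique_superset
  exact ⟨⟨t, ht⟩, hab_t (Set.mem_insert a {b}), hab_t (Set.mem_insert_of_mem a rfl)⟩

theorem cliqueGraph.exists_walk_length_le_one {Q R : CliqueVert G} {x : V} (hxQ : x ∈ Q.1)
    (hxR : x ∈ R.1) : ∃ W : (cliqueGraph G).Walk Q R, W.length ≤ 1 := by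
  by_cases h : Q = R
  · subst h
    exact ⟨Walk.nil, zero_le_one⟩
  · exact ⟨(Walk.nil).cons ⟨h, x, hxQ, hxR⟩, le_rfl⟩

end SimpleGraph

theorem cliqueGraph_walk_of_walk_general {V : Type*} (G : SimpleGraph V)
    (Q Q' : CliqueVert G) {v v' : V} (hv : v ∈ Q.1) (hv' : v' ∈ Q'.1)
    (P : G.Walk v v') :
    ∃ W : (cliqueGraph G).Walk Q Q', W.length ≤ P.length + 1 := by
  induction P generalizing Q with
  | nil => simpa using cliqueGraph.exists_walk_length_le_one hv hv'
  | cons hab p ih =>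
    obtain ⟨R, haR, hbR⟩ := hab.exists_cliqueVert_mem
    obtain ⟨W₁, hW₁⟩ := cliqueGraph.exists_walk_length_le_one hv haR
    obtain ⟨W₂, hW₂⟩ := ih R hbR hv'
    refine ⟨W₁.append W₂, ?_⟩
    rw [Walk.length_append, Walk.length_cons]
    omega

/-- If `Q` and `Q'` are cliques of a connected graph `G` and `v ∈ Q`, `v' ∈ Q'` are
joined by a path of length `ℓ` in `G`, then `Q` and `Q'` are joined by a path of
length at most `ℓ + 1` in the clique graph `kG`. -/
theorem cliqueGraph_walk_of_walk {V : Type*} (G : SimpleGraph V) (hG : G.Connected)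
    (Q Q' : CliqueVert G) {v v' : V} (hv : v ∈ Q.1) (hv' : v' ∈ Q'.1)
    (P : G.Walk v v') :
    ∃ W : (cliqueGraph G).Walk Q Q', W.length ≤ P.length + 1 :=
  cliqueGraph_walk_of_walk_general G Q Q' hv hv' P
end

section
/- Let p : G̃ → G be a triangular covering map and let α, β be homotopic walks in G with common start vertex v₀. Then the lifts of α and β starting at any fixed preimage ṽ of v₀ are homotopic walks in G̃; in particular, they have the same end vertex. -/
/-!
Every elementary move takes place inside a triangle or along an edge, hence inside the closed
neighbourhood of one vertex, where a triangular covering is an isomorphism. So each move of a walk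
lifts to an elementary move of any lift of it, and lifting a homotopy from `α` to `β` move by move
yields a walk homotopic to `α'` that lies over `β` and starts at `vt`. A walk is determined by its
image and its start vertex (injectivity on neighbourhoods), so this walk is `β'`.
-/

open SimpleGraph

/-- The closed neighbourhood of a vertex. -/
def closedNbhd {V : Type*} (G : SimpleGraph V) (v : V) : Set V := insert v (G.neighborSet v)

/-- A triangular covering map: a graph homomorphism between connected graphs whose
restriction to each closed neighbourhood is an isomorphism onto the closed
neighbourhood of the image vertex. -/
structure IsTriangularCover {V' V : Type*} {G' : SimpleGraph V'} {G : SimpleGraph V}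
    (p : G' →g G) : Prop where
  connDom : G'.Connected
  connCod : G.Connected
  injOn : ∀ v : V', Set.InjOn p (closedNbhd G' v)
  surjOn : ∀ v : V', Set.SurjOn p (closedNbhd G' v) (closedNbhd G (p v))
  reflectAdj : ∀ v x y : V', x ∈ closedNbhd G' v → y ∈ closedNbhd G' v →
    G.Adj (p x) (p y) → G'.Adj x y

/-- Elementary moves on walks (recorded as lists of vertices): triangle
removal/insertion and dead end removal/insertion. -/
inductive ElemMove {V : Type*} (G : SimpleGraph V) : List V → List V → Prop
  | triRemove (l₁ l₂ : List V) (a b c : V) (h₁ : G.Adj a b) (h₂ : G.Adj b c) (h₃ : G.Adj a c) :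
      ElemMove G (l₁ ++ a :: b :: c :: l₂) (l₁ ++ a :: c :: l₂)
  | triInsert (l₁ l₂ : List V) (a b c : V) (h₁ : G.Adj a b) (h₂ : G.Adj b c) (h₃ : G.Adj a c) :
      ElemMove G (l₁ ++ a :: c :: l₂) (l₁ ++ a :: b :: c :: l₂)
  | deadEndRemove (l₁ l₂ : List V) (a b : V) (h : G.Adj a b) :
      ElemMove G (l₁ ++ a :: b :: a :: l₂) (l₁ ++ a :: l₂)
  | deadEndInsert (l₁ l₂ : List V) (a b : V) (h : G.Adj a b) :
      ElemMove G (l₁ ++ a :: l₂) (l₁ ++ a :: b :: a :: l₂)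

/-- Two walks are homotopic if one can be transformed into the other by a finite
sequence of elementary moves. -/
def Homotopic {V : Type*} (G : SimpleGraph V) : List V → List V → Prop :=
  Relation.ReflTransGen (ElemMove G)

/-- A graph is triangularly simply connected if it is connected and every closed walk
is homotopic to a trivial walk. -/
def TriSimplyConnected {V : Type*} (G : SimpleGraph V) : Prop :=
  G.Connected ∧ ∀ (v : V) (l : List V), (v :: l).Chain' G.Adj →
    (v :: l).getLast (List.cons_ne_nil v l) = v → Homotopic G (v :: l) [v]

theorem List.IsChain.append_cons_of_isChain_cons {α : Type*} {R : α → α → Prop} {a : α}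
    {l s s' : List α} (h : (l ++ a :: s).IsChain R) (h' : (a :: s').IsChain R) :
    (l ++ a :: s').IsChain R :=
  List.isChain_split.mpr ⟨(List.isChain_split.mp h).1, h'⟩

namespace IsTriangularCover

variable {V' V : Type*} {G' : SimpleGraph V'} {G : SimpleGraph V} {p : G' →g G}

theorem eq_of_adj_of_adj (hp : IsTriangularCover p) {x u w : V'} (hu : G'.Adj x u)
    (hw : G'.Adj x w) (h : p u = p w) : u = w :=
  hp.injOn x (Set.mem_insert_of_mem _ hu) (Set.mem_insert_of_mem _ hw) h

theorem adj_of_adj_of_adj (hp : IsTriangularCover p) {x u w : V'} (hu : G'.Adj x u)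
    (hw : G'.Adj x w) (h : G.Adj (p u) (p w)) : G'.Adj u w :=
  hp.reflectAdj x u w (Set.mem_insert_of_mem _ hu) (Set.mem_insert_of_mem _ hw) h

theorem exists_adj_map_eq (hp : IsTriangularCover p) {x : V'} {b : V} (h : G.Adj (p x) b) :
    ∃ y, G'.Adj x y ∧ p y = b := by
  obtain ⟨y, hy | hy, rfl⟩ := hp.surjOn x (Set.mem_insert_of_mem _ h)
  · exact absurd (congrArg p hy).symm h.ne
  · exact ⟨y, hy, rfl⟩

theorem eq_of_isChain_cons (hp : IsTriangularCover p) {x : V'} {xs ys : List V'}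
    (hx : (x :: xs).IsChain G'.Adj) (hy : (x :: ys).IsChain G'.Adj)
    (h : xs.map p = ys.map p) : xs = ys := by
  induction xs generalizing x ys with
  | nil => exact (List.map_eq_nil_iff.mp h.symm).symm
  | cons u us ih =>
    obtain _ | ⟨w, ws⟩ := ys
    · simp at h
    obtain ⟨hpuw, hus⟩ := List.cons.inj h
    obtain rfl := hp.eq_of_adj_of_adj (List.isChain_cons_cons.mp hx).1
      (List.isChain_cons_cons.mp hy).1 hpuw
    rw [ih hx.tail hy.tail hus]

theorem eq_of_isChain (hp : IsTriangularCover p) {α' β' : List V'}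
    (hα : α'.IsChain G'.Adj) (hβ : β'.IsChain G'.Adj) (h : α'.map p = β'.map p)
    (hhead : α'.head? = β'.head?) : α' = β' := by
  obtain _ | ⟨x, xs⟩ := α' <;> obtain _ | ⟨y, ys⟩ := β'
  · rfl
  all_goals simp only [List.head?_nil, List.head?_cons, reduceCtorEq, Option.some.injEq] at hhead
  subst hhead
  rw [hp.eq_of_isChain_cons hα hβ (List.cons.inj h).2]

end IsTriangularCover

namespace ElemMove

variable {V' V : Type*} {G' : SimpleGraph V'} {G : SimpleGraph V}

theorem head?_eq {l l' : List V} (m : ElemMove G l l') : l.head? = l'.head? := by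
  cases m <;> simp [List.head?_append]

theorem getLast?_eq {l l' : List V} (m : ElemMove G l l') : l.getLast? = l'.getLast? := by
  cases m <;> simp [List.getLast?_append, List.getLast?_cons]

theorem exists_lift {p : G' →g G} (hp : IsTriangularCover p) {α β : List V}
    (m : ElemMove G α β) {α' : List V'} (hc : α'.IsChain G'.Adj) (hm : α'.map p = α) :
    ∃ β', ElemMove G' α' β' ∧ β'.IsChain G'.Adj ∧ β'.map p = β := by
  cases m with
  | triRemove _ _ _ _ _ _ _ hac =>
    simp only [List.map_eq_append_iff, List.map_eq_cons_iff] at hm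
    obtain ⟨L₁, _, rfl, rfl, a', _, rfl, rfl, b', _, rfl, rfl, c', L₂, rfl, rfl, rfl⟩ := hm
    obtain ⟨hab', hbc', hs⟩ : G'.Adj a' b' ∧ G'.Adj b' c' ∧ (c' :: L₂).IsChain G'.Adj := by
      simpa using (List.isChain_split.mp hc).2
    have hac' := hp.adj_of_adj_of_adj hab'.symm hbc' hac
    exact ⟨_, triRemove L₁ L₂ a' b' c' hab' hbc' hac',
      hc.append_cons_of_isChain_cons (hs.cons_cons hac'), by simp⟩
  | triInsert _ _ _ _ _ hab hbc _ =>
    simp only [List.map_eq_append_iff, List.map_eq_cons_iff] at hm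
    obtain ⟨L₁, _, rfl, rfl, a', _, rfl, rfl, c', L₂, rfl, rfl, rfl⟩ := hm
    have hs := (List.isChain_split.mp hc).2
    have hac' : G'.Adj a' c' := (List.isChain_cons_cons.mp hs).1
    obtain ⟨b', hab', rfl⟩ := hp.exists_adj_map_eq hab
    have hbc' := hp.adj_of_adj_of_adj hab' hac' hbc
    exact ⟨_, triInsert L₁ L₂ a' b' c' hab' hbc' hac',
      hc.append_cons_of_isChain_cons ((hs.tail.cons_cons hbc').cons_cons hab'), by simp⟩
  | deadEndRemove =>
    simp only [List.map_eq_append_iff, List.map_eq_cons_iff] at hm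
    obtain ⟨L₁, _, rfl, rfl, a', _, rfl, rfl, b', _, rfl, rfl, a'', L₂, rfl, ha, rfl⟩ := hm
    obtain ⟨hab', hba', hs⟩ : G'.Adj a' b' ∧ G'.Adj b' a'' ∧ (a'' :: L₂).IsChain G'.Adj := by
      simpa using (List.isChain_split.mp hc).2
    obtain rfl := hp.eq_of_adj_of_adj hba' hab'.symm ha
    exact ⟨_, deadEndRemove L₁ L₂ a'' b' hab', hc.append_cons_of_isChain_cons hs, by simp⟩
  | deadEndInsert _ _ _ _ hab =>
    simp only [List.map_eq_append_iff, List.map_eq_cons_iff] at hm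
    obtain ⟨L₁, _, rfl, rfl, a', L₂, rfl, rfl, rfl⟩ := hm
    obtain ⟨b', hab', rfl⟩ := hp.exists_adj_map_eq hab
    have hs := (List.isChain_split.mp hc).2
    exact ⟨_, deadEndInsert L₁ L₂ a' b' hab',
      hc.append_cons_of_isChain_cons ((hs.cons_cons hab'.symm).cons_cons hab'), by simp⟩

end ElemMove

namespace Homotopic

variable {V' V : Type*} {G' : SimpleGraph V'} {G : SimpleGraph V}

theorem head?_eq {l l' : List V} (h : Homotopic G l l') : l.head? = l'.head? := by
  induction h with
  | refl => rfl
  | tail _ m ih => exact ih.trans m.head?_eq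

theorem getLast?_eq {l l' : List V} (h : Homotopic G l l') : l.getLast? = l'.getLast? := by
  induction h with
  | refl => rfl
  | tail _ m ih => exact ih.trans m.getLast?_eq

theorem exists_lift {p : G' →g G} (hp : IsTriangularCover p) {α β : List V}
    (h : Homotopic G α β) {α' : List V'} (hc : α'.IsChain G'.Adj) (hm : α'.map p = α) :
    ∃ β', Homotopic G' α' β' ∧ β'.IsChain G'.Adj ∧ β'.map p = β := by
  induction h with
  | refl => exact ⟨α', .refl, hc, hm⟩
  | tail _ m ih =>
    obtain ⟨γ', hγ', hc', hm'⟩ := ih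
    obtain ⟨β', m', hβ', hmβ'⟩ := m.exists_lift hp hc' hm'
    exact ⟨β', hγ'.tail m', hβ', hmβ'⟩

end Homotopic

/-- Lifts of homotopic walks starting at the same preimage of the common start
vertex are homotopic; in particular they have the same end vertex. -/
theorem homotopicLifts {V' V : Type*} {G' : SimpleGraph V'} {G : SimpleGraph V}
    (p : G' →g G) (hp : IsTriangularCover p) (α β : List V)
    (hhom : Homotopic G α β)
    (α' β' : List V') (hα' : α'.Chain' G'.Adj) (hβ' : β'.Chain' G'.Adj)
    (hmapα : α'.map p = α) (hmapβ : β'.map p = β)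
    (vt : V') (hheadα : α'.head? = some vt) (hheadβ : β'.head? = some vt) :
    Homotopic G' α' β' ∧ α'.getLast? = β'.getLast? := by
  obtain ⟨γ', hγ', hcγ', hmγ'⟩ := hhom.exists_lift hp hα' hmapα
  obtain rfl : γ' = β' :=
    hp.eq_of_isChain hcγ' hβ' (hmγ'.trans hmapβ.symm) (by rw [← hγ'.head?_eq, hheadα, hheadβ])
  exact ⟨hγ', hγ'.getLast?_eq⟩
end

section
/- Every connected graph G admits a universal triangular covering map p : G̃ → G, i.e., a triangular covering map whose domain G̃ is triangularly simply connected. -/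
open SimpleGraph

/-!
The vertices of the cover are the homotopy classes of walks from a base vertex `b`, a class being
adjacent to the class of its extensions by one edge; the cover map sends a class to the common
endpoint of its walks. Triangle and dead end moves at the end of a walk make this map an
isomorphism on closed neighbourhoods. A closed walk in the cover is the lift of a continuation `t`
of a walk `m` from `b` with `m ++ t` homotopic to `m`. Every elementary move of `G` lifts to an
elementary move of the cover, so the lift of `m ++ t` is homotopic to the lift of `m`, and
cancelling their common prefix contracts the closed walk.
-/

section Homotopy

variable {V : Type*} {G : SimpleGraph V}

theorem ElemMove.symm {l m : List V} (h : ElemMove G l m) : ElemMove G m l := by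
  cases h with
  | triRemove l₁ l₂ a b c h₁ h₂ h₃ => exact .triInsert l₁ l₂ a b c h₁ h₂ h₃
  | triInsert l₁ l₂ a b c h₁ h₂ h₃ => exact .triRemove l₁ l₂ a b c h₁ h₂ h₃
  | deadEndRemove l₁ l₂ a b h => exact .deadEndInsert l₁ l₂ a b h
  | deadEndInsert l₁ l₂ a b h => exact .deadEndRemove l₁ l₂ a b h

theorem ElemMove.append_left {l m : List V} (s : List V) (h : ElemMove G l m) :
    ElemMove G (s ++ l) (s ++ m) := by
  cases h with
  | triRemove l₁ l₂ a b c h₁ h₂ h₃ =>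
    simpa using triRemove (s ++ l₁) l₂ a b c h₁ h₂ h₃
  | triInsert l₁ l₂ a b c h₁ h₂ h₃ =>
    simpa using triInsert (s ++ l₁) l₂ a b c h₁ h₂ h₃
  | deadEndRemove l₁ l₂ a b h => simpa using deadEndRemove (s ++ l₁) l₂ a b h
  | deadEndInsert l₁ l₂ a b h => simpa using deadEndInsert (s ++ l₁) l₂ a b h

theorem ElemMove.append_right {l m : List V} (s : List V) (h : ElemMove G l m) :
    ElemMove G (l ++ s) (m ++ s) := by
  cases h with
  | triRemove l₁ l₂ a b c h₁ h₂ h₃ =>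
    simpa using triRemove l₁ (l₂ ++ s) a b c h₁ h₂ h₃
  | triInsert l₁ l₂ a b c h₁ h₂ h₃ =>
    simpa using triInsert l₁ (l₂ ++ s) a b c h₁ h₂ h₃
  | deadEndRemove l₁ l₂ a b h => simpa using deadEndRemove l₁ (l₂ ++ s) a b h
  | deadEndInsert l₁ l₂ a b h => simpa using deadEndInsert l₁ (l₂ ++ s) a b h

theorem ElemMove.head?_eq_s7 {l m : List V} (h : ElemMove G l m) : l.head? = m.head? := by
  cases h <;> simp [List.head?_append]

theorem ElemMove.getLast?_eq_s7 {l m : List V} (h : ElemMove G l m) : l.getLast? = m.getLast? := by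
  cases h <;> simp [List.getLast?_append, List.getLast?_cons]

theorem ElemMove.isChain {l m : List V} (h : ElemMove G l m) (hl : l.IsChain G.Adj) :
    m.IsChain G.Adj := by
  cases h <;> simp_all [List.isChain_append, List.isChain_cons, G.adj_comm]

theorem ElemMove.homotopic {l m : List V} (h : ElemMove G l m) : Homotopic G l m := .single h

theorem Homotopic.symm {l m : List V} (h : Homotopic G l m) : Homotopic G m l := by
  induction h with
  | refl => exact .refl
  | tail _ h ih => exact ih.head h.symm

theorem Homotopic.trans {l m k : List V} (h : Homotopic G l m) (h' : Homotopic G m k) :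
    Homotopic G l k :=
  Relation.ReflTransGen.trans h h'

theorem Homotopic.append_left {l m : List V} (s : List V) (h : Homotopic G l m) :
    Homotopic G (s ++ l) (s ++ m) :=
  h.lift (s ++ ·) fun _ _ h => h.append_left s

theorem Homotopic.append_right {l m : List V} (s : List V) (h : Homotopic G l m) :
    Homotopic G (l ++ s) (m ++ s) :=
  h.lift (· ++ s) fun _ _ h => h.append_right s

theorem Homotopic.head?_eq_s7 {l m : List V} (h : Homotopic G l m) : l.head? = m.head? := by
  induction h with
  | refl => rfl
  | tail _ h ih => exact ih.trans h.head?_eq_s7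

theorem Homotopic.getLast?_eq_s7 {l m : List V} (h : Homotopic G l m) : l.getLast? = m.getLast? := by
  induction h with
  | refl => rfl
  | tail _ h ih => exact ih.trans h.getLast?_eq_s7

theorem Homotopic.isChain {l m : List V} (h : Homotopic G l m) (hl : l.IsChain G.Adj) :
    m.IsChain G.Adj := by
  induction h with
  | refl => exact hl
  | tail _ h ih => exact h.isChain ih

theorem Homotopic.of_cons_cons {a c : V} {l m : List V} (hac : G.Adj a c)
    (h : Homotopic G (a :: c :: l) (a :: c :: m)) : Homotopic G (c :: l) (c :: m) :=
  .head (.deadEndInsert [] l c a hac.symm) <|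
    (h.append_left [c]).tail (.deadEndRemove [] m c a hac.symm)

theorem Homotopic.cancel_left {v : V} {l m : List V} :
    ∀ {B : List V}, (B ++ [v]).IsChain G.Adj →
      Homotopic G (B ++ v :: l) (B ++ v :: m) → Homotopic G (v :: l) (v :: m)
  | [], _, h => h
  | [_], hB, h => h.of_cons_cons (List.isChain_pair.mp hB)
  | _ :: c :: B, hB, h =>
    have hB' : ((c :: B) ++ [v]).IsChain G.Adj := hB.tail
    cancel_left hB' (h.of_cons_cons (List.isChain_cons_cons.mp hB).1)

end Homotopy

namespace TriangularCover

variable {V : Type u} (G : SimpleGraph V) (b : V)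

def IsWalkFrom (l : List V) : Prop := l.head? = some b ∧ l.IsChain G.Adj

variable {G b}

theorem IsWalkFrom.ne_nil {l : List V} (h : IsWalkFrom G b l) : l ≠ [] := by
  rintro rfl
  exact absurd h.1 (by simp)

theorem IsWalkFrom.of_append {l r : List V} (h : IsWalkFrom G b (l ++ r)) (hl : l ≠ []) :
    IsWalkFrom G b l :=
  ⟨by simpa [List.head?_append_of_ne_nil _ hl] using h.1, h.2.left_of_append⟩

theorem IsWalkFrom.append_singleton {l : List V} {y : V} (h : IsWalkFrom G b l)
    (hy : G.Adj (l.getLastD b) y) : IsWalkFrom G b (l ++ [y]) := by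
  refine ⟨by simp [List.head?_append_of_ne_nil _ h.ne_nil, h.1], h.2.append (.singleton y) ?_⟩
  simp_all [List.getLast?_eq_some_getLast h.ne_nil]

theorem _root_.Homotopic.isWalkFrom_iff {l m : List V} (h : Homotopic G l m) :
    IsWalkFrom G b l ↔ IsWalkFrom G b m :=
  ⟨fun hl => ⟨h.head?_eq_s7 ▸ hl.1, h.isChain hl.2⟩,
    fun hm => ⟨h.symm.head?_eq_s7 ▸ hm.1, h.symm.isChain hm.2⟩⟩

theorem _root_.Homotopic.getLastD_eq {l m : List V} (h : Homotopic G l m) :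
    l.getLastD b = m.getLastD b := by
  simp [h.getLast?_eq_s7]

theorem homotopic_append_deadEnd {m : List V} {y : V} (hm : m ≠ [])
    (hy : G.Adj (m.getLastD b) y) : Homotopic G (m ++ [y, m.getLastD b]) m := by
  obtain ⟨l, a, rfl⟩ := (List.eq_nil_or_concat' m).resolve_left hm
  simp only [List.getLastD_concat] at hy ⊢
  simpa using (ElemMove.deadEndRemove l [] a y hy).homotopic

theorem homotopic_append_triangle {m : List V} {y z : V} (hm : m ≠ [])
    (hy : G.Adj (m.getLastD b) y) (hyz : G.Adj y z) (hz : G.Adj (m.getLastD b) z) :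
    Homotopic G (m ++ [y, z]) (m ++ [z]) := by
  obtain ⟨l, a, rfl⟩ := (List.eq_nil_or_concat' m).resolve_left hm
  simp only [List.getLastD_concat] at hy hz
  simpa using (ElemMove.triRemove l [] a y z hy hyz hz).homotopic

variable (G b)

def WalkFrom : Type u := {l : List V // IsWalkFrom G b l}

instance WalkFrom.setoid : Setoid (WalkFrom G b) where
  r w₁ w₂ := Homotopic G w₁.1 w₂.1
  iseqv := ⟨fun _ => .refl, Homotopic.symm, Homotopic.trans⟩

def WalkClass : Type u := Quotient (WalkFrom.setoid G b)

/-- The class of `m`; lists that are not walks from `b` are sent to the class of `[b]`. -/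
noncomputable def ofList (m : List V) : WalkClass G b :=
  open Classical in
  if h : IsWalkFrom G b m then ⟦(⟨m, h⟩ : WalkFrom G b)⟧
  else ⟦(⟨[b], rfl, .singleton b⟩ : WalkFrom G b)⟧

def IsStep (m m' : List V) : Prop :=
  G.Adj (m.getLastD b) (m'.getLastD b) ∧ Homotopic G (m ++ [m'.getLastD b]) m'

variable {G b}

theorem ofList_of_isWalkFrom {m : List V} (h : IsWalkFrom G b m) :
    ofList G b m = ⟦(⟨m, h⟩ : WalkFrom G b)⟧ :=
  dif_pos h

theorem exists_ofList (x : WalkClass G b) : ∃ m, IsWalkFrom G b m ∧ x = ofList G b m := by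
  induction x using Quotient.ind with
  | _ w => exact ⟨w.1, w.2, (ofList_of_isWalkFrom w.2).symm⟩

theorem ofList_eq_ofList_iff {m₁ m₂ : List V} (h₁ : IsWalkFrom G b m₁)
    (h₂ : IsWalkFrom G b m₂) : ofList G b m₁ = ofList G b m₂ ↔ Homotopic G m₁ m₂ := by
  rw [ofList_of_isWalkFrom h₁, ofList_of_isWalkFrom h₂]
  exact Quotient.eq

theorem ofList_eq_of_homotopic {m₁ m₂ : List V} (h : Homotopic G m₁ m₂) :
    ofList G b m₁ = ofList G b m₂ := by
  by_cases h₁ : IsWalkFrom G b m₁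
  · exact (ofList_eq_ofList_iff h₁ (h.isWalkFrom_iff.mp h₁)).mpr h
  · have h₂ : ¬ IsWalkFrom G b m₂ := fun h₂ => h₁ (h.isWalkFrom_iff.mpr h₂)
    have hbase {m : List V} (h : ¬ IsWalkFrom G b m) :
        ofList G b m = ⟦(⟨[b], rfl, .singleton b⟩ : WalkFrom G b)⟧ := dif_neg h
    rw [hbase h₁, hbase h₂]

theorem IsStep.of_homotopic {m₁ m₂ m₁' m₂' : List V} (h₁ : Homotopic G m₁ m₁')
    (h₂ : Homotopic G m₂ m₂') (h : IsStep G b m₁ m₂) : IsStep G b m₁' m₂' := by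
  obtain ⟨hadj, hm⟩ := h
  rw [IsStep, ← h₁.getLastD_eq, ← h₂.getLastD_eq]
  exact ⟨hadj, ((h₁.symm.append_right _).trans hm).trans h₂⟩

theorem IsStep.symm {m m' : List V} (hm : m ≠ []) (h : IsStep G b m m') : IsStep G b m' m := by
  obtain ⟨hadj, hm'⟩ := h
  refine ⟨hadj.symm, (hm'.symm.append_right _).trans ?_⟩
  simpa using homotopic_append_deadEnd hm hadj

variable (G b)

def coverGraph : SimpleGraph (WalkClass G b) where
  Adj := Quotient.lift₂ (fun w₁ w₂ => IsStep G b w₁.1 w₂.1) fun _ _ _ _ h₁ h₂ =>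
    propext ⟨IsStep.of_homotopic h₁ h₂, IsStep.of_homotopic h₁.symm h₂.symm⟩
  symm := ⟨fun x y => by
    induction x, y using Quotient.ind₂ with
    | _ w₁ w₂ => exact IsStep.symm w₁.2.ne_nil⟩
  loopless := ⟨fun x => by
    induction x using Quotient.ind with
    | _ w => exact fun h => G.irrefl h.1⟩

def coverMap : coverGraph G b →g G where
  toFun := Quotient.lift (fun w => w.1.getLastD b) fun _ _ h => h.getLastD_eq
  map_rel' {x y} := by
    induction x, y using Quotient.ind₂ with
    | _ w₁ w₂ => exact fun h => h.1

variable {G b}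

theorem coverMap_ofList {m : List V} (hm : IsWalkFrom G b m) :
    coverMap G b (ofList G b m) = m.getLastD b := by
  rw [ofList_of_isWalkFrom hm]
  rfl

theorem coverGraph_adj_ofList_iff {m : List V} (hm : IsWalkFrom G b m) {x : WalkClass G b} :
    (coverGraph G b).Adj (ofList G b m) x ↔
      G.Adj (m.getLastD b) (coverMap G b x) ∧ x = ofList G b (m ++ [coverMap G b x]) := by
  obtain ⟨m', hm', rfl⟩ := exists_ofList x
  have hstep : (coverGraph G b).Adj (ofList G b m) (ofList G b m') ↔ IsStep G b m m' := by
    rw [ofList_of_isWalkFrom hm, ofList_of_isWalkFrom hm']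
    rfl
  rw [hstep, IsStep, coverMap_ofList hm']
  refine and_congr_right fun hadj => ?_
  rw [ofList_eq_ofList_iff hm' (hm.append_singleton hadj)]
  exact ⟨Homotopic.symm, Homotopic.symm⟩

theorem coverGraph_adj_ofList_append_singleton {m r : List V} {y : V}
    (h : IsWalkFrom G b (m ++ y :: r)) (hm : m ≠ []) :
    (coverGraph G b).Adj (ofList G b m) (ofList G b (m ++ [y])) := by
  have hwalk : IsWalkFrom G b (m ++ [y]) :=
    IsWalkFrom.of_append (r := r) (by simpa using h) (by simp)
  have hadj : G.Adj (m.getLastD b) y := by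
    simpa [List.getLast?_eq_some_getLast hm] using h.2.rel_getLast_head_of_append hm (by simp)
  rw [coverGraph_adj_ofList_iff (h.of_append hm), coverMap_ofList hwalk]
  simpa using hadj

variable (G b) in
/-- `liftFrom G b pre t` lists the classes of `pre ++ t'` for the nonempty prefixes `t'` of `t`:
the lift of the continuation `t` of the walk `pre`. -/
noncomputable def liftFrom : List V → List V → List (WalkClass G b)
  | _, [] => []
  | pre, y :: t => ofList G b (pre ++ [y]) :: liftFrom (pre ++ [y]) t

@[simp]
theorem liftFrom_nil (pre : List V) : liftFrom G b pre [] = [] := rfl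

@[simp]
theorem liftFrom_cons (pre : List V) (y : V) (t : List V) :
    liftFrom G b pre (y :: t) = ofList G b (pre ++ [y]) :: liftFrom G b (pre ++ [y]) t := rfl

theorem liftFrom_append (pre t₁ t₂ : List V) :
    liftFrom G b pre (t₁ ++ t₂) = liftFrom G b pre t₁ ++ liftFrom G b (pre ++ t₁) t₂ := by
  induction t₁ generalizing pre with
  | nil => simp
  | cons y t ih => simp [ih]

theorem liftFrom_congr {pre pre' : List V} (h : Homotopic G pre pre') (t : List V) :
    liftFrom G b pre t = liftFrom G b pre' t := by
  induction t generalizing pre pre' with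
  | nil => rfl
  | cons y t ih =>
    simp only [liftFrom_cons, ofList_eq_of_homotopic (h.append_right [y]), ih (h.append_right [y])]

theorem getLast_cons_liftFrom (pre t : List V) :
    (ofList G b pre :: liftFrom G b pre t).getLast (List.cons_ne_nil _ _) =
      ofList G b (pre ++ t) := by
  induction t generalizing pre with
  | nil => simp
  | cons y t ih => simpa using ih (pre ++ [y])

theorem isChain_cons_liftFrom {pre t : List V} (h : IsWalkFrom G b (pre ++ t)) (hpre : pre ≠ []) :
    (ofList G b pre :: liftFrom G b pre t).IsChain (coverGraph G b).Adj := by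
  induction t generalizing pre with
  | nil => exact .singleton _
  | cons y t ih =>
    exact .cons_cons (coverGraph_adj_ofList_append_singleton h hpre)
      (ih (by simpa using h) (by simp))

theorem exists_eq_liftFrom {m : List V} (hm : IsWalkFrom G b m) {l : List (WalkClass G b)}
    (hl : (ofList G b m :: l).IsChain (coverGraph G b).Adj) :
    ∃ t, IsWalkFrom G b (m ++ t) ∧ l = liftFrom G b m t := by
  induction l generalizing m with
  | nil => exact ⟨[], by simpa using hm, rfl⟩
  | cons x l ih =>
    obtain ⟨hadj, hx⟩ := (coverGraph_adj_ofList_iff hm).mp (List.isChain_cons_cons.mp hl).1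
    have hm' := hm.append_singleton hadj
    obtain ⟨t, ht, rfl⟩ := ih hm' (hx ▸ (List.isChain_cons_cons.mp hl).2)
    exact ⟨coverMap G b x :: t, by simpa using ht, by rw [liftFrom_cons, ← hx]⟩

theorem elemMove_liftFrom_triRemove {l₁ l₂ : List V} {a x c : V} (h₁ : G.Adj a x)
    (h₂ : G.Adj x c) (h₃ : G.Adj a c) (hw : IsWalkFrom G b (l₁ ++ a :: x :: c :: l₂)) :
    ElemMove (coverGraph G b) (liftFrom G b [] (l₁ ++ a :: x :: c :: l₂))
      (liftFrom G b [] (l₁ ++ a :: c :: l₂)) := by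
  have hmove (s : List V) : Homotopic G (l₁ ++ a :: x :: c :: s) (l₁ ++ a :: c :: s) :=
    (ElemMove.triRemove l₁ s a x c h₁ h₂ h₃).homotopic
  have hw' := (hmove l₂).isWalkFrom_iff.mp hw
  have hax := coverGraph_adj_ofList_append_singleton (m := l₁ ++ [a]) (by simpa using hw)
    (by simp)
  have hxc := coverGraph_adj_ofList_append_singleton (m := l₁ ++ [a] ++ [x])
    (by simpa using hw) (by simp)
  have hac := coverGraph_adj_ofList_append_singleton (m := l₁ ++ [a]) (by simpa using hw')
    (by simp)
  have hc : ofList G b (l₁ ++ [a] ++ [x] ++ [c]) = ofList G b (l₁ ++ [a] ++ [c]) :=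
    ofList_eq_of_homotopic (by simpa using hmove [])
  have ht : liftFrom G b (l₁ ++ [a] ++ [x] ++ [c]) l₂ =
      liftFrom G b (l₁ ++ [a] ++ [c]) l₂ :=
    liftFrom_congr (by simpa using hmove []) l₂
  rw [hc] at hxc
  simp only [liftFrom_append, liftFrom_cons, List.nil_append, hc, ht]
  exact .triRemove _ _ _ _ _ hax hxc hac

theorem elemMove_liftFrom_deadEndRemove {l₁ l₂ : List V} {a x : V} (h : G.Adj a x)
    (hw : IsWalkFrom G b (l₁ ++ a :: x :: a :: l₂)) :
    ElemMove (coverGraph G b) (liftFrom G b [] (l₁ ++ a :: x :: a :: l₂))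
      (liftFrom G b [] (l₁ ++ a :: l₂)) := by
  have hmove (s : List V) : Homotopic G (l₁ ++ a :: x :: a :: s) (l₁ ++ a :: s) :=
    (ElemMove.deadEndRemove l₁ s a x h).homotopic
  have hax := coverGraph_adj_ofList_append_singleton (m := l₁ ++ [a]) (by simpa using hw)
    (by simp)
  have ha : ofList G b (l₁ ++ [a] ++ [x] ++ [a]) = ofList G b (l₁ ++ [a]) :=
    ofList_eq_of_homotopic (by simpa using hmove [])
  have ht : liftFrom G b (l₁ ++ [a] ++ [x] ++ [a]) l₂ = liftFrom G b (l₁ ++ [a]) l₂ :=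
    liftFrom_congr (by simpa using hmove []) l₂
  simp only [liftFrom_append, liftFrom_cons, List.nil_append, ha, ht]
  exact .deadEndRemove _ _ _ _ hax

theorem _root_.ElemMove.liftFrom {l m : List V} (h : ElemMove G l m) (hl : IsWalkFrom G b l) :
    ElemMove (coverGraph G b) (liftFrom G b [] l) (liftFrom G b [] m) := by
  cases h with
  | triRemove l₁ l₂ a x c h₁ h₂ h₃ => exact elemMove_liftFrom_triRemove h₁ h₂ h₃ hl
  | triInsert l₁ l₂ a x c h₁ h₂ h₃ =>
    have hm := (ElemMove.triInsert l₁ l₂ a x c h₁ h₂ h₃).homotopic.isWalkFrom_iff.mp hl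
    exact (elemMove_liftFrom_triRemove h₁ h₂ h₃ hm).symm
  | deadEndRemove l₁ l₂ a x h => exact elemMove_liftFrom_deadEndRemove h hl
  | deadEndInsert l₁ l₂ a x h =>
    have hm := (ElemMove.deadEndInsert l₁ l₂ a x h).homotopic.isWalkFrom_iff.mp hl
    exact (elemMove_liftFrom_deadEndRemove h hm).symm

theorem _root_.Homotopic.liftFrom {l m : List V} (h : Homotopic G l m) (hl : IsWalkFrom G b l) :
    Homotopic (coverGraph G b) (liftFrom G b [] l) (liftFrom G b [] m) := by
  induction h with
  | refl => exact .refl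
  | tail hlm h ih => exact ih.tail (h.liftFrom ((Homotopic.isWalkFrom_iff hlm).mp hl))

theorem isChain_liftFrom_nil {m : List V} (hm : IsWalkFrom G b m) :
    (liftFrom G b [] m).IsChain (coverGraph G b).Adj := by
  obtain ⟨t, rfl⟩ := List.head?_eq_some_iff.mp hm.1
  simpa using isChain_cons_liftFrom (pre := [b]) hm (by simp)

theorem coverGraph_connected : (coverGraph G b).Connected := by
  refine (connected_iff_exists_forall_reachable _).mpr ⟨ofList G b [b], fun x => ?_⟩
  obtain ⟨m, hm, rfl⟩ := exists_ofList x
  obtain ⟨t, rfl⟩ := List.head?_eq_some_iff.mp hm.1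
  rw [reachable_iff_reflTransGen]
  exact List.relationReflTransGen_of_exists_isChain_cons _
    (isChain_cons_liftFrom (pre := [b]) hm (by simp)) (getLast_cons_liftFrom [b] t)

theorem mem_closedNbhd_ofList_iff {m : List V} (hm : IsWalkFrom G b m) {x : WalkClass G b} :
    x ∈ closedNbhd (coverGraph G b) (ofList G b m) ↔ x = ofList G b m ∨
      G.Adj (m.getLastD b) (coverMap G b x) ∧ x = ofList G b (m ++ [coverMap G b x]) := by
  rw [closedNbhd, Set.mem_insert_iff, mem_neighborSet, coverGraph_adj_ofList_iff hm]

theorem injOn_coverMap_closedNbhd (x : WalkClass G b) :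
    Set.InjOn (coverMap G b) (closedNbhd (coverGraph G b) x) := by
  obtain ⟨m, hm, rfl⟩ := exists_ofList x
  intro y hy z hz hyz
  rw [mem_closedNbhd_ofList_iff hm] at hy hz
  rcases hy with rfl | ⟨hya, hy⟩ <;> rcases hz with rfl | ⟨hza, hz⟩
  · rfl
  · rw [coverMap_ofList hm] at hyz
    exact absurd (hyz ▸ hza) (G.irrefl)
  · rw [coverMap_ofList hm] at hyz
    exact absurd (hyz ▸ hya) (G.irrefl)
  · rw [hy, hz, hyz]

theorem surjOn_coverMap_closedNbhd (x : WalkClass G b) :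
    Set.SurjOn (coverMap G b) (closedNbhd (coverGraph G b) x) (closedNbhd G (coverMap G b x)) := by
  obtain ⟨m, hm, rfl⟩ := exists_ofList x
  rw [coverMap_ofList hm]
  rintro y (rfl | hy)
  · exact ⟨ofList G b m, Set.mem_insert _ _, coverMap_ofList hm⟩
  · have hmy := hm.append_singleton hy
    refine ⟨ofList G b (m ++ [y]), Set.mem_insert_of_mem _ ?_, by simp [coverMap_ofList hmy]⟩
    exact coverGraph_adj_ofList_append_singleton (r := []) hmy hm.ne_nil

theorem coverGraph_adj_of_mem_closedNbhd {x y z : WalkClass G b}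
    (hy : y ∈ closedNbhd (coverGraph G b) x) (hz : z ∈ closedNbhd (coverGraph G b) x)
    (hyz : G.Adj (coverMap G b y) (coverMap G b z)) : (coverGraph G b).Adj y z := by
  obtain ⟨m, hm, rfl⟩ := exists_ofList x
  rw [mem_closedNbhd_ofList_iff hm] at hy hz
  rcases hy with rfl | ⟨hya, hy⟩ <;> rcases hz with rfl | ⟨hza, hz⟩
  · exact absurd hyz (G.irrefl)
  · exact (coverGraph_adj_ofList_iff hm).mpr ⟨hza, hz⟩
  · exact ((coverGraph_adj_ofList_iff hm).mpr ⟨hya, hy⟩).symm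
  · have hmyz := (hm.append_singleton hya).append_singleton (by simpa using hyz)
    have htri : ofList G b (m ++ [coverMap G b y] ++ [coverMap G b z]) =
        ofList G b (m ++ [coverMap G b z]) :=
      ofList_eq_of_homotopic (by simpa using homotopic_append_triangle hm.ne_nil hya hyz hza)
    rw [hy, hz, ← htri]
    exact coverGraph_adj_ofList_append_singleton (r := []) hmyz (by simp)

theorem isTriangularCover_coverMap (hG : G.Connected) : IsTriangularCover (coverMap G b) where
  connDom := coverGraph_connected
  connCod := hG
  injOn := injOn_coverMap_closedNbhd
  surjOn := surjOn_coverMap_closedNbhd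
  reflectAdj _ _ _ := coverGraph_adj_of_mem_closedNbhd

theorem triSimplyConnected_coverGraph : TriSimplyConnected (coverGraph G b) := by
  refine ⟨coverGraph_connected, fun x l hl hlast => ?_⟩
  obtain ⟨m, hm, rfl⟩ := exists_ofList x
  obtain ⟨t, hmt, rfl⟩ := exists_eq_liftFrom hm hl
  have hloop : Homotopic G (m ++ t) m := by
    rw [← ofList_eq_ofList_iff hmt hm, ← getLast_cons_liftFrom]
    exact hlast
  have hlift := hloop.liftFrom hmt
  have hchain := isChain_liftFrom_nil hm
  obtain ⟨l, a, rfl⟩ := (List.eq_nil_or_concat' m).resolve_left hm.ne_nil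
  simp only [liftFrom_append, liftFrom_cons, liftFrom_nil, List.nil_append] at hlift hchain
  exact Homotopic.cancel_left hchain (by simpa using hlift)

end TriangularCover

/-- Every connected graph admits a universal triangular covering map, i.e., a
triangular covering map with triangularly simply connected domain. -/
theorem exists_universal_cover {V : Type u} (G : SimpleGraph V) (hG : G.Connected) :
    ∃ (V' : Type u) (G' : SimpleGraph V') (p : G' →g G),
      IsTriangularCover p ∧ TriSimplyConnected G' := by
  obtain ⟨b⟩ := hG.nonempty
  exact ⟨TriangularCover.WalkClass G b, TriangularCover.coverGraph G b,
    TriangularCover.coverMap G b, TriangularCover.isTriangularCover_coverMap hG,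
    TriangularCover.triSimplyConnected_coverGraph⟩
end

section
/- Let p : G̃ → G be a universal triangular covering map (G̃ triangularly simply connected) and q : Ḡ → G any triangular covering map. For any vertices ṽ ∈ G̃ and v̄ ∈ Ḡ with p(ṽ) = q(v̄), there exists a unique triangular covering map q̃ : G̃ → Ḡ with p = q ∘ q̃ and q̃(ṽ) = v̄. -/
/-!
Since `q` is injective on closed neighbourhoods, a walk of `G` lifts step by step, uniquely, to a
walk of `G''` from any vertex over its start. Inside a closed neighbourhood `q` also reflects
adjacency, so triangles and dead ends of `G` lift to triangles and dead ends, and the endpoint of a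
lift is invariant under the elementary moves. As `G'` is triangularly simply connected, the image
under `p` of a closed walk at `vt` is homotopic to the trivial walk, hence lifts to a closed walk
at `vb`. Thus lifting `p ∘ γ` from `vb`, for any walk `γ` from `vt` to `x`, ends at a vertex
`r x` independent of `γ`; `r` is a triangular cover because `p` and `q` are, and it is unique by
uniqueness of lifts.
-/

open SimpleGraph

theorem mem_closedNbhd_self {W : Type*} (H : SimpleGraph W) (v : W) : v ∈ closedNbhd H v :=
  Set.mem_insert _ _

theorem mem_closedNbhd_of_adj {W : Type*} {H : SimpleGraph W} {v x : W} (h : H.Adj v x) :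
    x ∈ closedNbhd H v :=
  Set.mem_insert_of_mem _ h

theorem mem_closedNbhd_iff {W : Type*} {H : SimpleGraph W} {v x : W} :
    x ∈ closedNbhd H v ↔ x = v ∨ H.Adj v x :=
  Set.mem_insert_iff

theorem mem_closedNbhd_comm {W : Type*} {H : SimpleGraph W} {v x : W} :
    x ∈ closedNbhd H v ↔ v ∈ closedNbhd H x := by
  simp only [mem_closedNbhd_iff, eq_comm, H.adj_comm]

theorem SimpleGraph.Hom.map_mem_closedNbhd {W₁ W₂ : Type*} {H₁ : SimpleGraph W₁}
    {H₂ : SimpleGraph W₂} (f : H₁ →g H₂) {v x : W₁} (h : x ∈ closedNbhd H₁ v) :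
    f x ∈ closedNbhd H₂ (f v) := by
  rcases mem_closedNbhd_iff.1 h with rfl | hvx
  · exact mem_closedNbhd_self _ _
  · exact mem_closedNbhd_of_adj (f.map_adj hvx)

theorem SimpleGraph.Walk.head?_support {W : Type*} {H : SimpleGraph W} {u v : W}
    (w : H.Walk u v) : w.support.head? = some u := by
  rw [← w.cons_tail_support]
  rfl

theorem SimpleGraph.Walk.getLastD_support {W : Type*} {H : SimpleGraph W} {u v : W}
    (w : H.Walk u v) (d : W) : w.support.getLastD d = v := by
  simp [List.getLastD_eq_getLast?, List.getLast?_eq_some_getLast w.support_ne_nil]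

namespace ElemMove

variable {V : Type*} {G : SimpleGraph V} {L L' : List V}

theorem map {W : Type*} {H : SimpleGraph W} (f : G →g H) (hm : ElemMove G L L') :
    ElemMove H (L.map f) (L'.map f) := by
  cases hm with
  | triRemove l₁ l₂ a b c h₁ h₂ h₃ =>
    simpa using
      triRemove (l₁.map f) (l₂.map f) _ _ _ (f.map_adj h₁) (f.map_adj h₂) (f.map_adj h₃)
  | triInsert l₁ l₂ a b c h₁ h₂ h₃ =>
    simpa using
      triInsert (l₁.map f) (l₂.map f) _ _ _ (f.map_adj h₁) (f.map_adj h₂) (f.map_adj h₃)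
  | deadEndRemove l₁ l₂ a b h =>
    simpa using deadEndRemove (l₁.map f) (l₂.map f) _ _ (f.map_adj h)
  | deadEndInsert l₁ l₂ a b h =>
    simpa using deadEndInsert (l₁.map f) (l₂.map f) _ _ (f.map_adj h)

theorem isChain_s8 (hm : ElemMove G L L') (hc : L.IsChain G.Adj) : L'.IsChain G.Adj := by
  cases hm <;> simp_all [List.isChain_append, List.isChain_cons_cons, G.adj_comm]

theorem head?_eq_s8 (hm : ElemMove G L L') : L.head? = L'.head? := by
  cases hm <;> simp [List.head?_append]

end ElemMove

namespace Homotopic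

variable {V : Type*} {G : SimpleGraph V} {L L' : List V}

theorem map {W : Type*} {H : SimpleGraph W} (f : G →g H) (hh : Homotopic G L L') :
    Homotopic H (L.map f) (L'.map f) :=
  Relation.ReflTransGen.lift (List.map f) (fun _ _ hm => ElemMove.map f hm) _ _ hh

theorem isChain_s8 (hh : Homotopic G L L') (hc : L.IsChain G.Adj) : L'.IsChain G.Adj := by
  induction hh with
  | refl => exact hc
  | tail _ hm ih => exact hm.isChain_s8 ih

theorem head?_eq_s8 (hh : Homotopic G L L') : L.head? = L'.head? := by
  induction hh with
  | refl => rfl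
  | tail _ hm ih => exact ih.trans hm.head?_eq_s8

end Homotopic

namespace IsTriangularCover

section Lifting

variable {V'' V : Type*} {G'' : SimpleGraph V''} {G : SimpleGraph V} {q : G'' →g G}
  (hq : IsTriangularCover q) {x y : V''} {w b c : V} {L L' : List V}

open Classical in
noncomputable def liftStep (x : V'') (w : V) : V'' :=
  if h : w ∈ closedNbhd G (q x) then (hq.surjOn x h).choose else x

theorem liftStep_spec (h : w ∈ closedNbhd G (q x)) :
    hq.liftStep x w ∈ closedNbhd G'' x ∧ q (hq.liftStep x w) = w := by
  rw [liftStep, dif_pos h]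
  exact (hq.surjOn x h).choose_spec

theorem map_liftStep (h : w ∈ closedNbhd G (q x)) : q (hq.liftStep x w) = w :=
  (hq.liftStep_spec h).2

theorem liftStep_map_of_mem (hy : y ∈ closedNbhd G'' x) : hq.liftStep x (q y) = y := by
  have hqy := q.map_mem_closedNbhd hy
  exact hq.injOn x (hq.liftStep_spec hqy).1 hy (hq.map_liftStep hqy)

theorem liftStep_map_self : hq.liftStep x (q x) = x :=
  hq.liftStep_map_of_mem (mem_closedNbhd_self _ x)

theorem adj_liftStep (h : G.Adj (q x) w) : G''.Adj x (hq.liftStep x w) := by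
  obtain ⟨hmem, hw⟩ := hq.liftStep_spec (mem_closedNbhd_of_adj h)
  rcases mem_closedNbhd_iff.1 hmem with hx | hadj
  · rw [hx] at hw
    exact absurd hw h.ne
  · exact hadj

/- The three lifted vertices lie in the closed neighbourhood of `liftStep x b`, where `q` reflects
adjacency. -/
theorem liftStep_liftStep (hb : b ∈ closedNbhd G (q x)) (hc : c ∈ closedNbhd G b)
    (hxc : c ∈ closedNbhd G (q x)) : hq.liftStep (hq.liftStep x b) c = hq.liftStep x c := by
  set y := hq.liftStep x b
  obtain ⟨hyx, hqy⟩ := hq.liftStep_spec hb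
  obtain ⟨hzy, hqz⟩ := hq.liftStep_spec (w := c) (hqy ▸ hc : c ∈ closedNbhd G (q y))
  have hxy : x ∈ closedNbhd G'' y := mem_closedNbhd_comm.1 hyx
  suffices hzx : hq.liftStep y c ∈ closedNbhd G'' x by
    rw [← hq.liftStep_map_of_mem hzx, hqz]
  rcases mem_closedNbhd_iff.1 hxc with rfl | hadj
  · rw [hq.injOn y hzy hxy hqz]
    exact mem_closedNbhd_self _ x
  · exact mem_closedNbhd_of_adj (hq.reflectAdj y x _ hxy hzy (by rwa [hqz]))

theorem liftStep_liftStep_map_self (hb : b ∈ closedNbhd G (q x)) :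
    hq.liftStep (hq.liftStep x b) (q x) = x := by
  rw [hq.liftStep_liftStep hb (mem_closedNbhd_comm.1 hb) (mem_closedNbhd_self _ _),
    hq.liftStep_map_self]

/-- The endpoint of the lift from `x` of the walk with vertex list `L`. The walk is expected to
start at `q x`; since `liftStep x (q x) = x`, its first vertex may be kept in `L`. -/
noncomputable def liftEnd (x : V'') (L : List V) : V'' :=
  L.foldl hq.liftStep x

@[simp]
theorem liftEnd_nil : hq.liftEnd x [] = x := rfl

theorem liftEnd_cons : hq.liftEnd x (w :: L) = hq.liftEnd (hq.liftStep x w) L := rfl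

theorem liftEnd_append : hq.liftEnd x (L ++ L') = hq.liftEnd (hq.liftEnd x L) L' :=
  List.foldl_append

theorem liftEnd_map_cons_of_mem (hy : y ∈ closedNbhd G'' x) :
    hq.liftEnd x (q y :: L) = hq.liftEnd y L := by
  rw [liftEnd_cons, hq.liftStep_map_of_mem hy]

@[simp]
theorem liftEnd_map_cons_self : hq.liftEnd x (q x :: L) = hq.liftEnd x L :=
  hq.liftEnd_map_cons_of_mem (mem_closedNbhd_self _ x)

theorem liftEnd_map_cons_cons (hb : b ∈ closedNbhd G (q x)) :
    hq.liftEnd x (q x :: b :: L) = hq.liftEnd (hq.liftStep x b) (b :: L) := by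
  rw [liftEnd_map_cons_self, liftEnd_cons, liftEnd_cons,
    hq.liftStep_liftStep hb (mem_closedNbhd_self _ b) hb]

theorem map_liftEnd : ∀ {L : List V} {x : V''}, L.IsChain G.Adj → L.head? = some (q x) →
    q (hq.liftEnd x L) = L.getLastD (q x)
  | [], _, _, _ => rfl
  | [_], x, _, hx => by
    obtain rfl := Option.some_inj.1 hx
    simp
  | _ :: b :: t, x, hc, hx => by
    obtain rfl := Option.some_inj.1 hx
    rw [List.isChain_cons_cons] at hc
    have hb := mem_closedNbhd_of_adj hc.1
    rw [hq.liftEnd_map_cons_cons hb,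
      map_liftEnd hc.2 (by rw [hq.map_liftStep hb]; rfl), hq.map_liftStep hb]
    simp only [List.getLastD_cons]

theorem liftEnd_liftEnd_reverse : ∀ {L : List V} {x : V''}, L.IsChain G.Adj →
    L.head? = some (q x) → hq.liftEnd (hq.liftEnd x L) L.reverse = x
  | [], _, _, _ => rfl
  | [_], x, _, hx => by
    obtain rfl := Option.some_inj.1 hx
    simp
  | _ :: b :: t, x, hc, hx => by
    obtain rfl := Option.some_inj.1 hx
    rw [List.isChain_cons_cons] at hc
    have hb := mem_closedNbhd_of_adj hc.1
    rw [hq.liftEnd_map_cons_cons hb, List.reverse_cons, liftEnd_append,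
      liftEnd_liftEnd_reverse hc.2 (by rw [hq.map_liftStep hb]; rfl), liftEnd_cons, liftEnd_nil,
      hq.liftStep_liftStep_map_self hb]

theorem liftEnd_append_cons_congr {l₁ M M' : List V} {a : V}
    (hc : (l₁ ++ a :: M).IsChain G.Adj) (hx : (l₁ ++ a :: M).head? = some (q x))
    (hM : ∀ z, q z = a → hq.liftEnd z M = hq.liftEnd z M') :
    hq.liftEnd x (l₁ ++ a :: M) = hq.liftEnd x (l₁ ++ a :: M') := by
  have hsplit : ∀ M₀ : List V, l₁ ++ a :: M₀ = (l₁ ++ [a]) ++ M₀ := by simp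
  rw [hsplit] at hc hx
  rw [hsplit M, hsplit M', hq.liftEnd_append (L := l₁ ++ [a]),
    hq.liftEnd_append (L := l₁ ++ [a])]
  refine hM _ ?_
  rw [hq.map_liftEnd (List.isChain_append.1 hc).1
    (by rwa [List.head?_append_of_ne_nil _ (by simp)] at hx)]
  simp

theorem liftEnd_eq_of_elemMove (hm : ElemMove G L L') (hc : L.IsChain G.Adj)
    (hx : L.head? = some (q x)) : hq.liftEnd x L = hq.liftEnd x L' := by
  cases hm <;> refine hq.liftEnd_append_cons_congr hc hx fun z hz => ?_ <;> subst hz <;>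
    simp only [liftEnd_cons, hq.liftStep_liftStep_map_self, hq.liftStep_liftStep,
      mem_closedNbhd_of_adj, *]

theorem liftEnd_eq_of_homotopic (hh : Homotopic G L L') (hc : L.IsChain G.Adj)
    (hx : L.head? = some (q x)) : hq.liftEnd x L = hq.liftEnd x L' := by
  induction hh with
  | refl => rfl
  | tail hLM hm ih =>
    exact ih.trans (hq.liftEnd_eq_of_elemMove hm (Homotopic.isChain_s8 hLM hc)
      (Homotopic.head?_eq_s8 hLM ▸ hx))

end Lifting

variable {V' V'' V : Type*} {G' : SimpleGraph V'} {G'' : SimpleGraph V''} {G : SimpleGraph V}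
  {p : G' →g G} {q : G'' →g G}

theorem of_comp_eq (hp : IsTriangularCover p) (hq : IsTriangularCover q) {r : G' →g G''}
    (hr : ∀ x, q (r x) = p x) : IsTriangularCover r where
  connDom := hp.connDom
  connCod := hq.connDom
  injOn v x hx y hy hxy := hp.injOn v hx hy (by rw [← hr, ← hr, hxy])
  surjOn v u hu := by
    obtain ⟨x, hx, hpx⟩ := hp.surjOn v (by rw [← hr]; exact q.map_mem_closedNbhd hu)
    exact ⟨x, hx, hq.injOn (r v) (r.map_mem_closedNbhd hx) hu (by rw [hr, hpx])⟩
  reflectAdj v x y hx hy hxy :=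
    hp.reflectAdj v x y hx hy (by rw [← hr, ← hr]; exact q.map_adj hxy)

section WalkLifting

variable (hq : IsTriangularCover q) {x y : V''} {u v : V}

theorem map_liftEnd_support (w : G.Walk u v) (hx : q x = u) :
    q (hq.liftEnd x w.support) = v := by
  rw [hq.map_liftEnd w.isChain_adj_support (by rw [w.head?_support, hx]), w.getLastD_support]

theorem liftEnd_support_tail (w : G.Walk u v) (hx : q x = u) :
    hq.liftEnd x w.support.tail = hq.liftEnd x w.support := by
  subst hx
  conv_rhs => rw [← w.cons_tail_support, liftEnd_map_cons_self]

theorem liftEnd_support_of_mem (w : G.Walk u v) (hy : y ∈ closedNbhd G'' x) (hu : q y = u) :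
    hq.liftEnd x w.support = hq.liftEnd y w.support := by
  subst hu
  rw [← w.cons_tail_support, hq.liftEnd_map_cons_of_mem hy, liftEnd_map_cons_self]

theorem apply_eq_liftEnd_of_comp_eq {r : G' →g G''} (hr : ∀ x, q (r x) = p x) {a b : V'}
    (w : G'.Walk a b) : r b = hq.liftEnd (r a) (w.map p).support := by
  induction w with
  | nil => simp [← hr]
  | @cons a a' _ haa' w ih =>
    rw [ih, Walk.map_cons, Walk.support_cons, ← hr a, liftEnd_map_cons_self,
      hq.liftEnd_support_of_mem _ (mem_closedNbhd_of_adj (r.map_adj haa')) (hr a')]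

variable {vt : V'} {vb : V''}

theorem liftEnd_map_support_of_closed (hsc : TriSimplyConnected G') (h : p vt = q vb)
    (c : G'.Walk vt vt) : hq.liftEnd vb (c.map p).support = vb := by
  have hhom : Homotopic G' c.support [vt] := by
    have := hsc.2 vt c.support.tail (by rw [c.cons_tail_support]; exact c.isChain_adj_support)
      (by simp)
    rwa [c.cons_tail_support] at this
  rw [hq.liftEnd_eq_of_homotopic (Walk.support_map p c ▸ hhom.map p)
    (c.map p).isChain_adj_support (by rw [Walk.head?_support, h])]
  simp [h]

theorem liftEnd_map_support_eq (hsc : TriSimplyConnected G') (h : p vt = q vb) {x : V'}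
    (w w' : G'.Walk vt x) : hq.liftEnd vb (w.map p).support = hq.liftEnd vb (w'.map p).support := by
  set y := hq.liftEnd vb (w.map p).support
  have hy : q y = p x := hq.map_liftEnd_support (w.map p) h.symm
  have hback : hq.liftEnd y (w'.map p).reverse.support = vb := by
    rw [← hq.liftEnd_support_tail _ hy]
    have hloop := hq.liftEnd_map_support_of_closed hsc h (w.append w'.reverse)
    rwa [Walk.map_append, Walk.support_append, liftEnd_append, ← Walk.reverse_map] at hloop
  calc y = hq.liftEnd (hq.liftEnd y (w'.map p).reverse.support)
        (w'.map p).reverse.support.reverse :=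
      (hq.liftEnd_liftEnd_reverse (Walk.isChain_adj_support _)
        (by rw [Walk.head?_support, hy])).symm
    _ = hq.liftEnd vb (w'.map p).support := by
      rw [hback, Walk.support_reverse, List.reverse_reverse]

end WalkLifting

theorem hom_ext_of_comp_eq (hq : IsTriangularCover q) (hconn : G'.Preconnected)
    {r r' : G' →g G''} (hr : ∀ x, q (r x) = p x) (hr' : ∀ x, q (r' x) = p x) {vt : V'}
    (hvt : r vt = r' vt) : r = r' :=
  DFunLike.ext r r' fun x => by
    obtain ⟨w⟩ := hconn vt x
    rw [hq.apply_eq_liftEnd_of_comp_eq hr w, hq.apply_eq_liftEnd_of_comp_eq hr' w, hvt]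

theorem exists_lift_of_triSimplyConnected (hq : IsTriangularCover q)
    (hsc : TriSimplyConnected G') {vt : V'} {vb : V''} (h : p vt = q vb) :
    ∃ r : G' →g G'', (∀ x, q (r x) = p x) ∧ r vt = vb := by
  have walk : ∀ x, G'.Walk vt x := fun x => (hsc.1.preconnected vt x).some
  set f : V' → V'' := fun x => hq.liftEnd vb ((walk x).map p).support
  have hf : ∀ {x} (w : G'.Walk vt x), f x = hq.liftEnd vb (w.map p).support :=
    fun w => hq.liftEnd_map_support_eq hsc h _ w
  have hqf : ∀ x, q (f x) = p x := fun x => hq.map_liftEnd_support _ h.symm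
  have hf_adj : ∀ {a b}, G'.Adj a b → f b = hq.liftStep (f a) (p b) := fun {a b} hab => by
    rw [hf ((walk a).append hab.toWalk), Walk.map_append, Walk.support_append, liftEnd_append,
      ← hf]
    rfl
  refine ⟨⟨f, fun hab => hf_adj hab ▸ hq.adj_liftStep ((hqf _).symm ▸ p.map_adj hab)⟩,
    hqf, ?_⟩
  change f vt = vb
  simp [hf Walk.nil, h]

end IsTriangularCover

/-- Universal property of the universal triangular cover: it uniquely factors
through any other triangular cover, once base points are fixed. -/
theorem universal_property {V' V'' V : Type*} {G' : SimpleGraph V'}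
    {G'' : SimpleGraph V''} {G : SimpleGraph V}
    (p : G' →g G) (hp : IsTriangularCover p) (hsc : TriSimplyConnected G')
    (q : G'' →g G) (hq : IsTriangularCover q)
    (vt : V') (vb : V'') (h : p vt = q vb) :
    ∃! r : G' →g G'', IsTriangularCover r ∧ (∀ x : V', q (r x) = p x) ∧ r vt = vb := by
  obtain ⟨r, hr, hrvt⟩ := hq.exists_lift_of_triSimplyConnected hsc h
  refine ⟨r, ⟨hp.of_comp_eq hq hr, hr, hrvt⟩, ?_⟩
  rintro r' ⟨-, hr', hr'vt⟩
  exact hq.hom_ext_of_comp_eq hsc.1.preconnected hr' hr (hr'vt.trans hrvt.symm)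
end
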